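/- arXiv:2207.03091 — 2 statements merged into one kernel-verified Lean document; each statement's English description precedes it below -/
import Mathlib

section
/- Let g: 2^V → ℝ be a monotone nondecreasing normalized supermodular function with supermodular curvature κ^g < 1. Then for any set S ⊆ V and any set T ⊆ V disjoint from S, g(T | S) ≤ (1/(1−κ^g)) · Σ_{v ∈ T} g(v | S). -/
open Finset

/-- Marginal gain g(v | S) = g(S ∪ {v}) − g(S). -/
def marg {V : Type*} [DecidableEq V] (g : Finset V → ℝ) (v : V) (S : Finset V) : ℝ :=
  g (insert v S) - g S

/-- Monotone nondecreasing set function. -/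
def Monot {V : Type*} (f : Finset V → ℝ) : Prop := ∀ A B : Finset V, A ⊆ B → f A ≤ f B

/-- Supermodular set function. -/
def Supmod {V : Type*} [DecidableEq V] (g : Finset V → ℝ) : Prop :=
  ∀ A B : Finset V, ∀ v : V, A ⊆ B → v ∉ B → marg g v A ≤ marg g v B

theorem stmt_2 {V : Type*} [Fintype V] [DecidableEq V]
    (g : Finset V → ℝ) (κg : ℝ)
    (hg0 : g ∅ = 0) (hgm : Monot g) (hgs : Supmod g)
    (hgpos : ∀ v : V, 0 < marg g v (Finset.univ.erase v))
    -- κg is the supermodular curvature: κ^g = 1 − min_v g({v}) / g(v | V∖{v})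
    (hκg : ∀ v : V, g {v} ≥ (1 - κg) * marg g v (Finset.univ.erase v))
    (hκg0 : 0 ≤ κg) (hκg1 : κg < 1)
    (S T : Finset V) (hdisj : Disjoint T S) :
    g (S ∪ T) - g S ≤ (1 / (1 - κg)) * ∑ v ∈ T, marg g v S := by
  have hc : 0 < 1 - κg := by linarith
  induction T using Finset.induction_on with
  | empty => simp [hg0]
  | @insert a T ha ih =>
    have hdT : Disjoint T S := (Finset.disjoint_insert_left.mp hdisj).2
    have haS : a ∉ S := (Finset.disjoint_insert_left.mp hdisj).1
    have haST : a ∉ S ∪ T := by simp [haS, ha]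
    have key : marg g a (S ∪ T) ≤ (1 / (1 - κg)) * marg g a S := by
      have h1 : marg g a (S ∪ T) ≤ marg g a (Finset.univ.erase a) := by
        apply hgs
        · intro x hx
          simp [Finset.mem_erase]
          rintro rfl; exact haST hx
        · simp
      have h2 : marg g a (Finset.univ.erase a) ≤ (1 / (1 - κg)) * g {a} := by
        have := hκg a
        rw [ge_iff_le, ← sub_nonneg] at this
        rw [div_mul_eq_mul_div, le_div_iff₀ hc]
        nlinarith
      have h3 : g {a} ≤ marg g a S := by
        have := hgs ∅ S a (Finset.empty_subset S) haS
        simpa [marg, hg0] using this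
      have h4 : (1 / (1 - κg)) * g {a} ≤ (1 / (1 - κg)) * marg g a S := by
        apply mul_le_mul_of_nonneg_left h3
        positivity
      linarith
    have hins : S ∪ insert a T = insert a (S ∪ T) := by
      ext x; simp [or_comm, or_assoc, or_left_comm]
    rw [hins, Finset.sum_insert ha]
    have : g (insert a (S ∪ T)) - g S = marg g a (S ∪ T) + (g (S ∪ T) - g S) := by
      simp [marg]
    rw [this, mul_add]
    exact add_le_add key (ih hdT)
end

section
/- Let g: 2^V → ℝ be a monotone nondecreasing normalized supermodular function with curvature κ^g, and define l_2(S) = Σ_{j∈S} g({j}). Then l_2(S) ≥ (1 − κ^g)·g(S) for every S ⊆ V, and g_1(S) = g(S) − l_2(S) is a monotone nondecreasing, normalized supermodular function with supermodular curvature equal to 1 (whenever g_1(v | V∖{v}) > 0 for some v). -/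
open Finset

lemma monot_of_marg_nonneg {V : Type*} [DecidableEq V] (f : Finset V → ℝ)
    (h : ∀ v S, v ∉ S → 0 ≤ marg f v S) : Monot f := by
  have key : ∀ n : ℕ, ∀ A B : Finset V, A ⊆ B → (B \ A).card = n → f A ≤ f B := by
    intro n
    induction n with
    | zero =>
      intro A B hAB hc
      have : B \ A = ∅ := Finset.card_eq_zero.mp hc
      have hBA : B ⊆ A := by
        intro x hx
        by_contra hxA
        exact absurd (Finset.mem_sdiff.mpr ⟨hx, hxA⟩) (by simp [this])
      have : A = B := Finset.Subset.antisymm hAB hBA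
      rw [this]
    | succ n ih =>
      intro A B hAB hc
      have hne : (B \ A).Nonempty := by
        rw [← Finset.card_pos, hc]; omega
      obtain ⟨v, hv⟩ := hne
      rw [Finset.mem_sdiff] at hv
      have h1 : f A ≤ f (insert v A) := by
        have := h v A hv.2
        unfold marg at this; linarith
      have h2 : insert v A ⊆ B := Finset.insert_subset hv.1 hAB
      have h3 : (B \ insert v A).card = n := by
        have : B \ insert v A = (B \ A).erase v := by
          ext x; simp [Finset.mem_sdiff, Finset.mem_erase]; tauto
        rw [this, Finset.card_erase_of_mem (Finset.mem_sdiff.mpr hv), hc]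
        omega
      exact le_trans h1 (ih (insert v A) B h2 h3)
  intro A B hAB
  exact key (B \ A).card A B hAB rfl

theorem stmt_5 {V : Type*} [Fintype V] [DecidableEq V] [Nonempty V]
    (g : Finset V → ℝ) (κg : ℝ)
    (hg0 : g ∅ = 0) (hgm : Monot g) (hgs : Supmod g)
    (hgpos : ∀ v : V, 0 < marg g v (Finset.univ.erase v))
    -- κg is the supermodular curvature: ∀ v, g({v}) ≥ (1 − κg)·g(v | V∖{v})
    (hκg : ∀ v : V, g {v} ≥ (1 - κg) * marg g v (Finset.univ.erase v))
    (hκg0 : 0 ≤ κg) (hκg1 : κg ≤ 1)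
    (l2 g1 : Finset V → ℝ)
    (hl2 : ∀ S : Finset V, l2 S = ∑ j ∈ S, g {j})
    (hg1 : ∀ S : Finset V, g1 S = g S - l2 S) :
    (∀ S : Finset V, l2 S ≥ (1 - κg) * g S)
    ∧ Monot g1 ∧ g1 ∅ = 0 ∧ Supmod g1
    ∧ ((∃ v : V, 0 < marg g1 v (Finset.univ.erase v)) →
        1 - Finset.univ.inf' Finset.univ_nonempty
            (fun v : V => g1 {v} / marg g1 v (Finset.univ.erase v)) = 1) := by
  have hgsingle : ∀ v : V, g {v} = marg g v ∅ := by
    intro v; unfold marg; simp [hg0]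
  -- g S ≤ ∑ top marginals
  have hsum : ∀ S : Finset V, g S ≤ ∑ j ∈ S, marg g j (Finset.univ.erase j) := by
    intro S
    induction S using Finset.induction with
    | empty => simp [hg0]
    | @insert v S hvS ih =>
      rw [Finset.sum_insert hvS]
      have hsub : S ⊆ Finset.univ.erase v := by
        intro x hx
        exact Finset.mem_erase.mpr ⟨fun h => hvS (h ▸ hx), Finset.mem_univ x⟩
      have := hgs S (Finset.univ.erase v) v hsub (Finset.notMem_erase v _)
      simp only [marg] at this ih ⊢
      linarith
  have part1 : ∀ S : Finset V, l2 S ≥ (1 - κg) * g S := by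
    intro S
    rw [hl2]
    have h1 : (1 - κg) * g S ≤ (1 - κg) * ∑ j ∈ S, marg g j (Finset.univ.erase j) :=
      mul_le_mul_of_nonneg_left (hsum S) (by linarith)
    rw [Finset.mul_sum] at h1
    have h2 : ∑ j ∈ S, (1 - κg) * marg g j (Finset.univ.erase j) ≤ ∑ j ∈ S, g {j} :=
      Finset.sum_le_sum (fun j _ => hκg j)
    linarith
  have hmarg1 : ∀ v : V, ∀ S : Finset V, v ∉ S → marg g1 v S = marg g v S - g {v} := by
    intro v S hvS
    unfold marg
    rw [hg1, hg1, hl2, hl2, Finset.sum_insert hvS]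
    ring
  have hmono : Monot g1 := by
    apply monot_of_marg_nonneg
    intro v S hvS
    rw [hmarg1 v S hvS, hgsingle]
    have := hgs ∅ S v (Finset.empty_subset S) hvS
    linarith
  have hnorm : g1 ∅ = 0 := by rw [hg1, hl2]; simp [hg0]
  have hsup : Supmod g1 := by
    intro A B v hAB hvB
    have hvA : v ∉ A := fun h => hvB (hAB h)
    rw [hmarg1 v A hvA, hmarg1 v B hvB]
    have := hgs A B v hAB hvB
    linarith
  refine ⟨part1, hmono, hnorm, hsup, fun _ => ?_⟩
  have hz : ∀ v : V, g1 {v} = 0 := by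
    intro v; rw [hg1, hl2]; simp
  have : (fun v : V => g1 {v} / marg g1 v (Finset.univ.erase v)) = fun _ => (0 : ℝ) := by
    funext v; rw [hz]; exact zero_div _
  rw [this, Finset.inf'_const]
  norm_num
end
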